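/- arXiv:2104.14766 — 5 statements merged into one kernel-verified Lean document; each statement's English description precedes it below -/
import Mathlib

section
/- Let A be a finite set of positive integers such that Σ(A) contains every integer in the interval [x, x+y). Suppose a₁, …, a_s are positive integers not in A satisfying a_i ≤ y + ∑_{j<i} a_j for each i = 1,…,s. Then Σ(A ∪ {a₁,…,a_s}) contains every integer in the interval [x, x + y + ∑_{i=1}^s a_i). -/
/-!
Add the `aᵢ` one at a time. If `Σ(B)` contains the window `[x, x + y)` and `c ∉ B` with
`c ≤ y`, then `Σ(B ∪ {c})` contains `[x, x + y + c)`: each `z` in the new part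
`[x + y, x + y + c)` is `c` plus the element `z - c` of the old window. The hypothesis
`aᵢ ≤ y + ∑_{j<i} aⱼ` is exactly `c ≤` the current window length at step `i`.
-/

/-- The set of integers representable as a sum of distinct elements of the finite set `A`. -/
def subsetSums (A : Finset ℕ) : Set ℕ :=
  {z | ∃ S : Finset ℕ, S ⊆ A ∧ ∑ s ∈ S, s = z}

open Finset

lemma subsetSums_mono {A B : Finset ℕ} (h : A ⊆ B) : subsetSums A ⊆ subsetSums B := by
  rintro z ⟨S, hS, rfl⟩
  exact ⟨S, hS.trans h, rfl⟩

lemma Ico_subset_subsetSums_insert {B : Finset ℕ} {x y c : ℕ} (hc : c ∉ B) (hcy : c ≤ y)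
    (h : Set.Ico x (x + y) ⊆ subsetSums B) :
    Set.Ico x (x + y + c) ⊆ subsetSums (insert c B) := by
  rintro z ⟨hxz, hz⟩
  by_cases hzy : z < x + y
  · exact subsetSums_mono (subset_insert c B) (h ⟨hxz, hzy⟩)
  obtain ⟨S, hSB, hS⟩ := h (show z - c ∈ Set.Ico x (x + y) by constructor <;> omega)
  refine ⟨insert c S, insert_subset_insert c hSB, ?_⟩
  rw [sum_insert fun hcS => hc (hSB hcS), hS]
  omega

lemma Fin.image_univ_eq_insert_last {α : Type*} [DecidableEq α] {n : ℕ} (a : Fin (n + 1) → α) :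
    image a univ = insert (a (Fin.last n)) (image (fun i : Fin n => a i.castSucc) univ) := by
  ext b
  simp [Fin.exists_fin_succ', or_comm, eq_comm]

theorem Ico_subset_subsetSums_union_image {A : Finset ℕ} {x y : ℕ}
    (hA : Set.Ico x (x + y) ⊆ subsetSums A) :
    ∀ {s : ℕ} (a : Fin s → ℕ), Function.Injective a → (∀ i, a i ∉ A) →
      (∀ i, a i ≤ y + ∑ j < i, a j) →
      Set.Ico x (x + y + ∑ i, a i) ⊆ subsetSums (A ∪ image a univ) := by
  intro s
  induction s with
  | zero =>
    intro a _ _ _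
    simpa using hA
  | succ n ih =>
    intro a hinj hnotin hle
    have hprefix := ih (fun i => a i.castSucc) (hinj.comp (Fin.castSucc_injective n))
      (fun i => hnotin _) (fun i => by simpa [Fin.sum_Iio_castSucc] using hle i.castSucc)
    have hlast_notin : a (Fin.last n) ∉ A ∪ image (fun i : Fin n => a i.castSucc) univ := by
      simp only [mem_union, mem_image, mem_univ, true_and, not_or, not_exists]
      exact ⟨hnotin _, fun i h => (Fin.castSucc_lt_last i).ne (hinj h)⟩
    have hlast_le : a (Fin.last n) ≤ y + ∑ i : Fin n, a i.castSucc := by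
      simpa [Fin.Iio_last_eq_map] using hle (Fin.last n)
    rw [Fin.image_univ_eq_insert_last, union_insert, Fin.sum_univ_castSucc, ← add_assoc,
      add_assoc x y]
    exact Ico_subset_subsetSums_insert hlast_notin hlast_le (by rwa [← add_assoc])

theorem stmt10_general (A : Finset ℕ) (x y : ℕ)
    (hxy : ∀ z : ℕ, x ≤ z → z < x + y → z ∈ subsetSums A)
    (s : ℕ) (a : Fin s → ℕ)
    (hainj : Function.Injective a) (hanotin : ∀ i, a i ∉ A)
    (hale : ∀ i : Fin s, a i ≤ y + ∑ j ∈ Finset.univ.filter (fun j => j < i), a j) :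
    ∀ z : ℕ, x ≤ z → z < x + y + ∑ i, a i →
      z ∈ subsetSums (A ∪ Finset.image a Finset.univ) := by
  have hwindow : Set.Ico x (x + y) ⊆ subsetSums A := fun z hz => hxy z hz.1 hz.2
  have hle : ∀ i, a i ≤ y + ∑ j < i, a j := by simpa only [filter_gt_eq_Iio] using hale
  exact fun z hxz hz => Ico_subset_subsetSums_union_image hwindow a hainj hanotin hle ⟨hxz, hz⟩

/-- Graham's lemma: if `Σ(A)` contains every integer in `[x, x+y)` and `a₁,…,a_s` are
distinct positive integers not in `A` with `a_i ≤ y + ∑_{j<i} a_j` for each `i`, then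
`Σ(A ∪ {a₁,…,a_s})` contains every integer in `[x, x + y + ∑ a_i)`. -/
theorem stmt10 (A : Finset ℕ) (hA : ∀ b ∈ A, 0 < b) (x y : ℕ)
    (hxy : ∀ z : ℕ, x ≤ z → z < x + y → z ∈ subsetSums A)
    (s : ℕ) (a : Fin s → ℕ) (hapos : ∀ i, 0 < a i)
    (hainj : Function.Injective a) (hanotin : ∀ i, a i ∉ A)
    (hale : ∀ i : Fin s, a i ≤ y + ∑ j ∈ Finset.univ.filter (fun j => j < i), a j) :
    ∀ z : ℕ, x ≤ z → z < x + y + ∑ i, a i →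
      z ∈ subsetSums (A ∪ Finset.image a Finset.univ) :=
  stmt10_general A x y hxy s a hainj hanotin hale
end

section
/- Let m be a positive integer and let A be a finite set of integers with m ∉ A. If the image of Σ(A) under reduction modulo m has at least h elements, then |Σ(A ∪ {m})| ≥ |Σ(A)| + h. -/
/-- The finite set of integers representable as a sum of distinct elements of `A`. -/
def subsetSumsZ (A : Finset ℤ) : Finset ℤ :=
  A.powerset.image (fun S => ∑ x ∈ S, x)

/-!
Adjoining `m` gives `Σ(A ∪ {m}) = Σ(A) ∪ (Σ(A) + m)`, so it suffices to find `h` elements of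
`(Σ(A) + m) \ Σ(A)`. In every residue class mod `m` that meets `Σ(A)`, the largest element of
`Σ(A)` in that class, shifted by `m`, is such an element, so `(Σ(A) + m) \ Σ(A)` meets at least
as many residue classes as `Σ(A)`.
-/

open Finset

lemma subsetSumsZ_insert {a : ℤ} {A : Finset ℤ} (ha : a ∉ A) :
    subsetSumsZ (insert a A) = subsetSumsZ A ∪ (subsetSumsZ A).image (· + a) := by
  unfold subsetSumsZ
  rw [powerset_insert, image_union, image_image, image_image]
  congr 1
  refine image_congr fun S hS => ?_
  have haS : a ∉ S := fun h => ha (mem_powerset.mp hS h)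
  simp [sum_insert haS, add_comm]

section Periodic

variable {G β : Type*} [AddCommGroup G] [LinearOrder G] [IsOrderedAddMonoid G]
  [DecidableEq β]

lemma image_subset_image_sdiff_of_periodic (S : Finset G) {m : G} (hm : 0 < m) {f : G → β}
    (hf : ∀ z, f (z + m) = f z) : S.image f ⊆ (S.image (· + m) \ S).image f := by
  intro r hr
  obtain ⟨z, hz, rfl⟩ := mem_image.mp hr
  set C := S.filter (fun y => f y = f z)
  have hC : C.Nonempty := ⟨z, mem_filter.mpr ⟨hz, rfl⟩⟩
  obtain ⟨hMS, hMf⟩ := mem_filter.mp (C.max'_mem hC)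
  refine mem_image.mpr ⟨C.max' hC + m, mem_sdiff.mpr ⟨mem_image_of_mem _ hMS, fun hS => ?_⟩,
    (hf _).trans hMf⟩
  have hle : C.max' hC + m ≤ C.max' hC :=
    C.le_max' _ (mem_filter.mpr ⟨hS, (hf _).trans hMf⟩)
  exact (lt_add_of_pos_right _ hm).not_ge hle

lemma card_image_le_card_image_sdiff_of_periodic (S : Finset G) {m : G} (hm : 0 < m)
    {f : G → β} (hf : ∀ z, f (z + m) = f z) :
    #(S.image f) ≤ #(S.image (· + m) \ S) :=
  (card_le_card (image_subset_image_sdiff_of_periodic S hm hf)).trans card_image_le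

end Periodic

/-- If `m` is a positive integer, `A` a finite set of integers with `m ∉ A`, and the image of
`Σ(A)` modulo `m` has at least `h` elements, then `|Σ(A ∪ {m})| ≥ |Σ(A)| + h`. -/
theorem stmt11 (m : ℕ) (hm : 0 < m) (A : Finset ℤ) (hmA : (m : ℤ) ∉ A) (h : ℕ)
    (hcard : h ≤ ((subsetSumsZ A).image (fun z : ℤ => (z : ZMod m))).card) :
    (subsetSumsZ A).card + h ≤ (subsetSumsZ (insert (m : ℤ) A)).card := by
  have hnew := card_image_le_card_image_sdiff_of_periodic (subsetSumsZ A)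
    (Int.natCast_pos.mpr hm) (f := fun z : ℤ => (z : ZMod m)) (by simp)
  rw [subsetSumsZ_insert hmA, ← union_sdiff_self_eq_union,
    card_union_of_disjoint disjoint_sdiff]
  omega
end

section
/- Let m and d be positive integers and let A ⊆ ℤ_m with d < |A| < m. Let G_d be the set of x ∈ ℤ_m such that |(A + x) ∪ A| ≤ |A| + d. Then |G_d| ≤ |A|² / (|A| − d). -/
/-!
For `x ∈ G_d`, inclusion–exclusion gives `|(A + x) ∩ A| = 2|A| - |(A + x) ∪ A| ≥ |A| - d`, and
`|(A + x) ∩ A|` counts the pairs `(a, b) ∈ A × A` with `a - b = x`. Summing over `x` counts every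
pair once, so `|G_d| (|A| - d) ≤ |A|²`. The argument works in any abelian group: `d < |A|` forces
`G_d ⊆ A - A`.
-/

open scoped Pointwise

namespace Finset

theorem sum_addConvolution {G : Type*} [AddGroup G] [DecidableEq G] (A B : Finset G) :
    ∑ x ∈ A + B, A.addConvolution B x = #A * #B := by
  rw [← card_product]
  exact (card_eq_sum_card_fiberwise fun ab hab ↦
    add_mem_add (mem_product.1 hab).1 (mem_product.1 hab).2).symm

variable {G : Type*} [AddCommGroup G] [DecidableEq G]

theorem card_image_add_right_inter (A : Finset G) (x : G) :
    #(A.image (· + x) ∩ A) = A.addConvolution (-A) x := by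
  have hA : A.image (· + x) = x +ᵥ A := by
    simp only [vadd_finset_def, vadd_eq_add, add_comm x]
  rw [hA, inter_comm, card_inter_vadd]

theorem card_image_add_right_union_add_card_inter (A : Finset G) (x : G) :
    #(A.image (· + x) ∪ A) + #(A.image (· + x) ∩ A) = 2 * #A := by
  rw [card_union_add_card_inter, card_image_of_injective _ (add_left_injective x), two_mul]

theorem ncard_setOf_card_image_add_right_union_le_mul_le {d : ℕ} (A : Finset G) (hd : d < #A) :
    {x : G | #(A.image (· + x) ∪ A) ≤ #A + d}.ncard * (#A - d) ≤ #A ^ 2 := by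
  set S := (A - A).filter fun x ↦ #(A.image (· + x) ∪ A) ≤ #A + d
  have hS : {x : G | #(A.image (· + x) ∪ A) ≤ #A + d} = S := by
    ext x
    simp only [Set.mem_ofPred_eq, coe_filter, S]
    refine (and_iff_right_of_imp fun hx ↦ ?_).symm
    rw [sub_eq_add_neg, ← addConvolution_pos, ← card_image_add_right_inter]
    have := card_image_add_right_union_add_card_inter A x
    omega
  have hlarge : ∀ x ∈ S, #A - d ≤ A.addConvolution (-A) x := by
    intro x hx
    have := card_image_add_right_union_add_card_inter A x
    rw [card_image_add_right_inter] at this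
    have := (mem_filter.1 hx).2
    omega
  calc {x : G | #(A.image (· + x) ∪ A) ≤ #A + d}.ncard * (#A - d)
      = #S • (#A - d) := by rw [hS, Set.ncard_coe_finset, smul_eq_mul]
    _ ≤ ∑ x ∈ S, A.addConvolution (-A) x := card_nsmul_le_sum _ _ _ hlarge
    _ ≤ ∑ x ∈ A + -A, A.addConvolution (-A) x :=
        sum_le_sum_of_subset (by rw [← sub_eq_add_neg]; exact filter_subset _ _)
    _ = #A ^ 2 := by rw [sum_addConvolution, card_neg, sq]

end Finset

theorem stmt12_general (m : ℕ) (d : ℕ) (A : Finset (ZMod m))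
    (h1 : d < A.card) :
    ({x : ZMod m | (A.image (· + x) ∪ A).card ≤ A.card + d}.ncard : ℝ) ≤
      (A.card : ℝ) ^ 2 / ((A.card : ℝ) - (d : ℝ)) := by
  have hpos : (0 : ℝ) < A.card - d := sub_pos.2 (by exact_mod_cast h1)
  rw [le_div_iff₀ hpos]
  have key := Finset.ncard_setOf_card_image_add_right_union_le_mul_le A h1
  rwa [← Nat.cast_le (α := ℝ), Nat.cast_mul, Nat.cast_sub h1.le, Nat.cast_pow] at key

/-- Let `m, d` be positive integers and `A ⊆ ℤ_m` with `d < |A| < m`. If `G_d` is the set of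
`x ∈ ℤ_m` with `|(A + x) ∪ A| ≤ |A| + d`, then `|G_d| ≤ |A|²/(|A| − d)`. -/
theorem stmt12 (m : ℕ) (hm : 0 < m) (d : ℕ) (hd : 0 < d) (A : Finset (ZMod m))
    (h1 : d < A.card) (h2 : A.card < m) :
    ({x : ZMod m | (A.image (· + x) ∪ A).card ≤ A.card + d}.ncard : ℝ) ≤
      (A.card : ℝ) ^ 2 / ((A.card : ℝ) - (d : ℝ)) :=
  stmt12_general m d A h1
end

section
/- Let S be a set of positive integers and let m and q be positive integers. Then |Σ(S) ∩ [m]| ≤ 2^{m/q} · ∏_{a ∈ S ∩ [m]} (1 + 2^{−a/q}) ≤ 2^{m/q} · exp( ∑_{a ∈ S ∩ [m]} 2^{−a/q} ). -/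
open Classical

/-- The set of integers representable as a sum, of distinct elements, of the (possibly
infinite) set `S` of positive integers. -/
def subsetSumsSet (S : Set ℕ) : Set ℕ :=
  {z | ∃ T : Finset ℕ, ↑T ⊆ S ∧ ∑ a ∈ T, a = z}

/-!
Rankin's trick: for `0 ≤ x ≤ 1`, each subset sum `z ≤ m` satisfies `x ^ m ≤ x ^ z`, and every
such `z` is the sum of a subset `T` of `S ∩ [1, m]`, so `x ^ z = ∏ a ∈ T, x ^ a`. Summing over
all subsets gives `|Σ(S) ∩ [1, m]| · x ^ m ≤ ∏ a ∈ S ∩ [1, m], (1 + x ^ a)`; the theorem is the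
case `x = 2 ^ (-1/q)`, followed by `1 + y ≤ exp y`.
-/

lemma mem_image_sum_powerset_of_mem_subsetSumsSet {S : Set ℕ} {m z : ℕ}
    (hz : z ∈ subsetSumsSet S) (hzm : z ≤ m) :
    z ∈ (((Finset.Icc 1 m).filter (· ∈ S)).powerset.image fun T => ∑ a ∈ T, a) := by
  obtain ⟨T, hTS, rfl⟩ := hz
  refine Finset.mem_image.mpr ⟨T.filter (· ≠ 0), ?_, Finset.sum_filter_ne_zero T⟩
  refine Finset.mem_powerset.mpr fun a ha => ?_
  obtain ⟨haT, ha0⟩ := Finset.mem_filter.mp ha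
  have hale : a ≤ ∑ b ∈ T, b := Finset.single_le_sum (fun b _ => Nat.zero_le b) haT
  simp only [Finset.mem_filter, Finset.mem_Icc]
  exact ⟨⟨Nat.one_le_iff_ne_zero.mpr ha0, hale.trans hzm⟩, hTS haT⟩

lemma sum_pow_image_sum_powerset_le (F : Finset ℕ) {x : ℝ} (hx : 0 ≤ x) :
    ∑ z ∈ F.powerset.image (fun T => ∑ a ∈ T, a), x ^ z ≤ ∏ a ∈ F, (1 + x ^ a) :=
  calc ∑ z ∈ F.powerset.image (fun T => ∑ a ∈ T, a), x ^ z
      ≤ ∑ T ∈ F.powerset, x ^ ∑ a ∈ T, a :=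
        Finset.sum_image_le_of_nonneg fun _ _ => pow_nonneg hx _
    _ = ∏ a ∈ F, (1 + x ^ a) := by
        rw [Finset.prod_one_add]
        exact Finset.sum_congr rfl fun T _ => (Finset.prod_pow_eq_pow_sum T (fun a => a) x).symm

theorem ncard_subsetSumsSet_inter_Icc_mul_pow_le (S : Set ℕ) (m : ℕ) {x : ℝ}
    (hx₀ : 0 ≤ x) (hx₁ : x ≤ 1) :
    ((subsetSumsSet S ∩ Set.Icc 1 m).ncard : ℝ) * x ^ m ≤
      ∏ a ∈ (Finset.Icc 1 m).filter (· ∈ S), (1 + x ^ a) := by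
  set B := (Finset.Icc 1 m).filter (· ∈ subsetSumsSet S)
  have hB : subsetSumsSet S ∩ Set.Icc 1 m = ↑B := by
    ext z
    simp only [B, Set.mem_inter_iff, Set.mem_Icc, Finset.coe_filter, Finset.mem_Icc,
      Set.mem_ofPred_eq]
    tauto
  have hBm : ∀ z ∈ B, z ≤ m := fun z hz => (Finset.mem_Icc.mp (Finset.mem_filter.mp hz).1).2
  rw [hB, Set.ncard_coe_finset]
  calc (B.card : ℝ) * x ^ m
      = ∑ _z ∈ B, x ^ m := by rw [Finset.sum_const, nsmul_eq_mul]
    _ ≤ ∑ z ∈ B, x ^ z :=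
        Finset.sum_le_sum fun z hz => pow_le_pow_of_le_one hx₀ hx₁ (hBm z hz)
    _ ≤ ∑ z ∈ ((Finset.Icc 1 m).filter (· ∈ S)).powerset.image (fun T => ∑ a ∈ T, a), x ^ z :=
        Finset.sum_le_sum_of_subset_of_nonneg
          (fun z hz => mem_image_sum_powerset_of_mem_subsetSumsSet
            (Finset.mem_filter.mp hz).2 (hBm z hz))
          fun _ _ _ => pow_nonneg hx₀ _
    _ ≤ _ := sum_pow_image_sum_powerset_le _ hx₀

theorem stmt15_general (S : Set ℕ) (m q : ℕ) :
    ((subsetSumsSet S ∩ Set.Icc 1 m).ncard : ℝ) ≤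
      (2 : ℝ) ^ ((m : ℝ) / (q : ℝ)) *
        ∏ a ∈ Finset.filter (fun a => a ∈ S) (Finset.Icc 1 m),
          (1 + (2 : ℝ) ^ (-((a : ℝ) / (q : ℝ)))) ∧
    (2 : ℝ) ^ ((m : ℝ) / (q : ℝ)) *
        ∏ a ∈ Finset.filter (fun a => a ∈ S) (Finset.Icc 1 m),
          (1 + (2 : ℝ) ^ (-((a : ℝ) / (q : ℝ)))) ≤
      (2 : ℝ) ^ ((m : ℝ) / (q : ℝ)) *
        Real.exp (∑ a ∈ Finset.filter (fun a => a ∈ S) (Finset.Icc 1 m),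
          (2 : ℝ) ^ (-((a : ℝ) / (q : ℝ)))) := by
  set x : ℝ := (2 : ℝ) ^ (-(1 / (q : ℝ)))
  have hx₀ : 0 ≤ x := by positivity
  have hx₁ : x ≤ 1 := Real.rpow_le_one_of_one_le_of_nonpos one_le_two
    (neg_nonpos.mpr (by positivity))
  have hpow : ∀ n : ℕ, (2 : ℝ) ^ (-((n : ℝ) / (q : ℝ))) = x ^ n := fun n => by
    rw [← Real.rpow_mul_natCast zero_le_two]; ring_nf
  have hinv : (2 : ℝ) ^ ((m : ℝ) / (q : ℝ)) = (x ^ m)⁻¹ := by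
    rw [← hpow, Real.rpow_neg zero_le_two, inv_inv]
  simp only [hpow]
  refine ⟨?_, ?_⟩
  · rw [hinv, inv_mul_eq_div, le_div_iff₀ (pow_pos (by positivity) m)]
    exact ncard_subsetSumsSet_inter_Icc_mul_pow_le S m hx₀ hx₁
  · gcongr
    exact Real.prod_one_add_le_exp_sum _ fun a => pow_nonneg hx₀ a

/-- Let `S` be a set of positive integers and `m, q` positive integers. Then
`|Σ(S) ∩ [m]| ≤ 2^{m/q} · ∏_{a ∈ S ∩ [m]} (1 + 2^{−a/q})
             ≤ 2^{m/q} · exp(∑_{a ∈ S ∩ [m]} 2^{−a/q})`. -/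
theorem stmt15 (S : Set ℕ) (hS : ∀ a ∈ S, 0 < a) (m q : ℕ) (hm : 0 < m) (hq : 0 < q) :
    ((subsetSumsSet S ∩ Set.Icc 1 m).ncard : ℝ) ≤
      (2 : ℝ) ^ ((m : ℝ) / (q : ℝ)) *
        ∏ a ∈ Finset.filter (fun a => a ∈ S) (Finset.Icc 1 m),
          (1 + (2 : ℝ) ^ (-((a : ℝ) / (q : ℝ)))) ∧
    (2 : ℝ) ^ ((m : ℝ) / (q : ℝ)) *
        ∏ a ∈ Finset.filter (fun a => a ∈ S) (Finset.Icc 1 m),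
          (1 + (2 : ℝ) ^ (-((a : ℝ) / (q : ℝ)))) ≤
      (2 : ℝ) ^ ((m : ℝ) / (q : ℝ)) *
        Real.exp (∑ a ∈ Finset.filter (fun a => a ∈ S) (Finset.Icc 1 m),
          (2 : ℝ) ^ (-((a : ℝ) / (q : ℝ)))) :=
  stmt15_general S m q
end

section
/- Let ε > 0. If A = (a_n)_{n≥1} is a monotonically increasing sequence of positive integers which is ε-complete, then there exists a constant C such that a_n ≤ ∑_{i ≤ εn + C} a_i holds for all positive integers n. -/
/-!
Suppose no constant works. Then for every `C` there are arbitrarily large `n` with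
`∑_{i ≤ εn + C} a_i < a_n`, and this forces `ε < 1`. Iterating, we find gaps `(B_k, N_{k+1})`
with `B_k ≥ ε N_{k+1} + N_k` and `∑_{i ≤ B_k} a_i + 1 < a_{N_{k+1}}`. The indices outside all
gaps form a subsequence `J` of relative density at least `ε` in every initial segment: if `k` is
the last gap starting below `m`, at most `N_k + min(N_{k+1}, m) - B_k ≤ (1 - ε) m` indices in
`[1, m]` lie in gaps. But `J` is not complete, since `∑_{i ≤ B_k} a_i + 1` is too large
for the terms of `J` below the gap and too small for those above it.
-/

/-- The subsequence of `a` indexed by `I` is complete: every sufficiently large positive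
integer is a sum of distinct terms of the subsequence. -/
def seqComplete (a : ℕ → ℕ) (I : Set ℕ) : Prop :=
  ∃ N : ℕ, ∀ z : ℕ, N ≤ z → ∃ S : Finset ℕ, ↑S ⊆ I ∧ ∑ i ∈ S, a i = z

/-- The number of terms of the subsequence of `a` indexed by `I` whose value is at most `n`. -/
noncomputable def seqCount (a : ℕ → ℕ) (I : Set ℕ) (n : ℕ) : ℕ :=
  {i | i ∈ I ∧ a i ≤ n}.ncard

/-- The sequence `(a_n)_{n ≥ 1}` is `ε`-complete: every subsequence `A'` with
`|A' ∩ [n]| ≥ ε·|A ∩ [n]|` for all sufficiently large `n` is complete. -/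
def EpsComplete (ε : ℝ) (a : ℕ → ℕ) : Prop :=
  ∀ J : Set ℕ, J ⊆ Set.Ici 1 →
    (∃ N : ℕ, ∀ n : ℕ, N ≤ n →
      ε * (seqCount a (Set.Ici 1) n : ℝ) ≤ (seqCount a J n : ℝ)) →
    seqComplete a J

section SumBounds

variable {a : ℕ → ℕ}

theorem le_sum_Icc (hpos : ∀ n : ℕ, 1 ≤ n → 0 < a n) (B : ℕ) :
    B ≤ ∑ i ∈ Finset.Icc 1 B, a i :=
  calc B = ∑ _i ∈ Finset.Icc 1 B, 1 := by simp
    _ ≤ ∑ i ∈ Finset.Icc 1 B, a i :=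
      Finset.sum_le_sum fun i hi => hpos i (Finset.mem_Icc.mp hi).1

theorem le_sum_Icc_floor_of_le (hpos : ∀ n : ℕ, 1 ≤ n → 0 < a n) {ε C : ℝ} (hε : 0 ≤ ε)
    {n : ℕ} (h : (a n : ℝ) ≤ C) : a n ≤ ∑ i ∈ Finset.Icc 1 ⌊ε * n + C⌋₊, a i := by
  have : 0 ≤ ε * n := by positivity
  exact (Nat.le_floor (by linarith)).trans (le_sum_Icc hpos _)

theorem le_sum_Icc_floor_of_one_le {ε C : ℝ} (hε : 1 ≤ ε) (hC : 0 ≤ C) {n : ℕ} (hn : 1 ≤ n) :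
    a n ≤ ∑ i ∈ Finset.Icc 1 ⌊ε * n + C⌋₊, a i := by
  have hn' : (n : ℝ) ≤ ε * n + C := by nlinarith [(n.cast_nonneg : (0 : ℝ) ≤ n)]
  exact Finset.single_le_sum (fun i _ => Nat.zero_le (a i))
    (Finset.mem_Icc.mpr ⟨hn, Nat.le_floor hn'⟩)

end SumBounds

section Counterexamples

variable {a : ℕ → ℕ} {ε : ℝ}

theorem exists_gt_of_forall_sum_Icc_floor_lt (hpos : ∀ n : ℕ, 1 ≤ n → 0 < a n)
    (hmono : ∀ i j : ℕ, 1 ≤ i → i ≤ j → a i ≤ a j) (hε : 0 ≤ ε)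
    (hbad : ∀ C : ℝ, 0 ≤ C → ∃ n : ℕ, 1 ≤ n ∧ ∑ i ∈ Finset.Icc 1 ⌊ε * n + C⌋₊, a i < a n)
    {C : ℝ} (hC : 0 ≤ C) (M : ℕ) :
    ∃ n : ℕ, M < n ∧ ∑ i ∈ Finset.Icc 1 ⌊ε * n + C⌋₊, a i < a n := by
  obtain ⟨n, hn, hlt⟩ := hbad (C + a (M + 1)) (by positivity)
  refine ⟨n, lt_of_not_ge fun hnM => hlt.not_ge (le_sum_Icc_floor_of_le hpos hε ?_), ?_⟩
  · have : a n ≤ a (M + 1) := hmono n (M + 1) hn (by omega)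
    have : (a n : ℝ) ≤ a (M + 1) := by exact_mod_cast this
    linarith
  · refine lt_of_le_of_lt (Finset.sum_le_sum_of_subset (Finset.Icc_subset_Icc_right ?_)) hlt
    exact Nat.floor_mono (by linarith [(a (M + 1)).cast_nonneg (α := ℝ)])

theorem exists_gap (hpos : ∀ n : ℕ, 1 ≤ n → 0 < a n) (hε0 : 0 ≤ ε) (hε1 : ε < 1)
    (hbad : ∀ C : ℝ, 0 ≤ C → ∀ M : ℕ,
      ∃ n : ℕ, M < n ∧ ∑ i ∈ Finset.Icc 1 ⌊ε * n + C⌋₊, a i < a n) (p : ℕ) :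
    ∃ n B : ℕ, ε * n + p ≤ B ∧ B < n ∧ ∑ i ∈ Finset.Icc 1 B, a i + 1 < a n := by
  obtain ⟨M, hM⟩ := exists_nat_gt ((p + 1) / (1 - ε))
  obtain ⟨n, hMn, hlt⟩ := hbad (p + 2) (by positivity) M
  have hceil : (⌈ε * n⌉₊ : ℝ) < ε * n + 1 := Nat.ceil_lt_add_one (by positivity)
  have hn : (p + 1 : ℝ) < (1 - ε) * n := by
    rw [div_lt_iff₀ (by linarith)] at hM
    have : (M : ℝ) < n := by exact_mod_cast hMn
    nlinarith
  refine ⟨n, ⌈ε * n⌉₊ + p, ?_, ?_, ?_⟩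
  · push_cast
    linarith [Nat.le_ceil (ε * n)]
  · have : ((⌈ε * n⌉₊ + p : ℕ) : ℝ) < n := by push_cast; linarith
    exact_mod_cast this
  · have hB : ⌈ε * n⌉₊ + p + 1 ≤ ⌊ε * n + ((p : ℝ) + 2)⌋₊ :=
      Nat.le_floor (by push_cast; linarith)
    have hsum := Finset.sum_le_sum_of_subset (f := a) (Finset.Icc_subset_Icc_right (a := 1) hB)
    rw [Finset.sum_Icc_succ_top (by omega)] at hsum
    have := hpos (⌈ε * n⌉₊ + p + 1) (by omega)
    omega

theorem exists_gaps (hpos : ∀ n : ℕ, 1 ≤ n → 0 < a n) (hε0 : 0 ≤ ε) (hε1 : ε < 1)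
    (hbad : ∀ C : ℝ, 0 ≤ C → ∀ M : ℕ,
      ∃ n : ℕ, M < n ∧ ∑ i ∈ Finset.Icc 1 ⌊ε * n + C⌋₊, a i < a n) :
    ∃ B N : ℕ → ℕ, (∀ k, ε * N (k + 1) + N k ≤ B k) ∧ (∀ k, B k < N (k + 1)) ∧
      ∀ k, ∑ i ∈ Finset.Icc 1 (B k), a i + 1 < a (N (k + 1)) := by
  choose next gap hgap hlt hsum using exists_gap hpos hε0 hε1 hbad
  let N : ℕ → ℕ := fun k => Nat.rec 0 (fun _ p => next p) k
  exact ⟨fun k => gap (N k), N, fun k => hgap (N k), fun k => hlt (N k), fun k => hsum (N k)⟩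

end Counterexamples

def outsideGaps (B N : ℕ → ℕ) : Set ℕ :=
  {i | 1 ≤ i ∧ ∀ k, i ≤ B k ∨ N (k + 1) ≤ i}

section Gaps

variable {ε : ℝ} {B N : ℕ → ℕ}

theorem le_of_gaps (hε : 0 ≤ ε) (hB : ∀ k, ε * N (k + 1) + N k ≤ B k) (k : ℕ) : N k ≤ B k := by
  have := hB k
  have : 0 ≤ ε * N (k + 1) := by positivity
  exact_mod_cast (by linarith : (N k : ℝ) ≤ B k)

theorem strictMono_left_of_gaps (hε : 0 ≤ ε) (hB : ∀ k, ε * N (k + 1) + N k ≤ B k)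
    (hBN : ∀ k, B k < N (k + 1)) : StrictMono B :=
  strictMono_nat_of_lt_succ fun k => (hBN k).trans_le (le_of_gaps hε hB (k + 1))

theorem strictMono_right_of_gaps (hε : 0 ≤ ε) (hB : ∀ k, ε * N (k + 1) + N k ≤ B k)
    (hBN : ∀ k, B k < N (k + 1)) : StrictMono N :=
  strictMono_nat_of_lt_succ fun k => (le_of_gaps hε hB k).trans_lt (hBN k)

theorem ncard_diff_outsideGaps_le (hε0 : 0 ≤ ε) (hε1 : ε ≤ 1)
    (hB : ∀ k, ε * N (k + 1) + N k ≤ B k) (hBN : ∀ k, B k < N (k + 1)) (m : ℕ) :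
    ((Set.Icc 1 m \ outsideGaps B N).ncard : ℝ) ≤ (1 - ε) * m := by
  by_cases hm : ∃ k, B k < m
  swap
  · push Not at hm
    have : Set.Icc 1 m \ outsideGaps B N = ∅ := by
      refine Set.eq_empty_of_forall_notMem fun i ⟨⟨hi1, him⟩, hiJ⟩ => hiJ ⟨hi1, fun k => ?_⟩
      exact Or.inl (him.trans (hm k))
    rw [this, Set.ncard_empty, Nat.cast_zero]
    exact mul_nonneg (by linarith) m.cast_nonneg
  have hBid := (strictMono_left_of_gaps hε0 hB hBN).id_le
  obtain ⟨j, hj⟩ := hm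
  set k := Nat.findGreatest (B · < m) m
  have hk : B k < m := Nat.findGreatest_spec (P := (B · < m)) ((hBid j).trans hj.le) hj
  set m' := min (N (k + 1)) m with hm'
  have hsub : Set.Icc 1 m \ outsideGaps B N ⊆ Set.Iio (N k) ∪ Set.Ioc (B k) m' := by
    rintro i ⟨⟨hi1, him⟩, hiJ⟩
    simp only [outsideGaps, Set.mem_ofPred_eq, not_and, not_forall, not_or, not_le] at hiJ
    obtain ⟨j, hBj, hjN⟩ := hiJ hi1
    have hjk : j ≤ k := Nat.le_findGreatest ((hBid j).trans (hBj.trans_le him).le)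
      (hBj.trans_le him)
    rcases hjk.lt_or_eq with hjk | rfl
    · exact Or.inl (hjN.trans_le ((strictMono_right_of_gaps hε0 hB hBN).monotone hjk))
    · exact Or.inr ⟨hBj, le_min hjN.le him⟩
  have hcard : (Set.Icc 1 m \ outsideGaps B N).ncard ≤ N k + (m' - B k) := by
    refine (Set.ncard_le_ncard hsub ((Set.finite_Iio _).union (Set.finite_Ioc _ _))).trans ?_
    simpa using Set.ncard_union_le (Set.Iio (N k)) (Set.Ioc (B k) m')
  have hBm' : B k ≤ m' := le_min (hBN k).le hk.le
  have hm'N : (m' : ℝ) ≤ N (k + 1) := by exact_mod_cast min_le_left _ _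
  have hm'm : (m' : ℝ) ≤ m := by exact_mod_cast min_le_right _ _
  calc ((Set.Icc 1 m \ outsideGaps B N).ncard : ℝ) ≤ N k + m' - B k := by
        rw [add_sub_assoc, ← Nat.cast_sub hBm']
        exact_mod_cast hcard
    _ ≤ m' - ε * N (k + 1) := by linarith [hB k]
    _ ≤ (1 - ε) * m' := by nlinarith
    _ ≤ (1 - ε) * m := by nlinarith

theorem le_ncard_inter_outsideGaps (hε0 : 0 ≤ ε) (hε1 : ε ≤ 1)
    (hB : ∀ k, ε * N (k + 1) + N k ≤ B k) (hBN : ∀ k, B k < N (k + 1)) (m : ℕ) :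
    ε * m ≤ (Set.Icc 1 m ∩ outsideGaps B N).ncard := by
  have h := Set.ncard_inter_add_ncard_sdiff_eq_ncard (Set.Icc 1 m) (outsideGaps B N)
  rw [Set.ncard_Icc_nat, Nat.add_sub_cancel] at h
  have h' : ((Set.Icc 1 m ∩ outsideGaps B N).ncard : ℝ)
      + (Set.Icc 1 m \ outsideGaps B N).ncard = m := by exact_mod_cast h
  linarith [ncard_diff_outsideGaps_le hε0 hε1 hB hBN m]

end Gaps

section Completeness

variable {a : ℕ → ℕ}

theorem exists_forall_le_iff_le (hmono : ∀ i j : ℕ, 1 ≤ i → i ≤ j → a i ≤ a j)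
    (hunb : ∀ c : ℕ, ∃ n : ℕ, 1 ≤ n ∧ c < a n) (c : ℕ) :
    ∃ m, ∀ i, 1 ≤ i → (a i ≤ c ↔ i ≤ m) := by
  have hex : ∃ m, c < a (m + 1) := by
    obtain ⟨n, hn, hcn⟩ := hunb c
    exact ⟨n - 1, by rwa [Nat.sub_add_cancel hn]⟩
  refine ⟨Nat.find hex, fun i hi => ⟨fun hic => ?_, fun him => ?_⟩⟩
  · by_contra! h
    have := hmono (Nat.find hex + 1) i (by omega) h
    have := Nat.find_spec hex
    omega
  · obtain ⟨j, rfl⟩ : ∃ j, i = j + 1 := ⟨i - 1, by omega⟩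
    exact not_lt.mp (Nat.find_min hex (by omega))

theorem seqCount_eq_ncard {I : Set ℕ} {c m : ℕ} (hI : I ⊆ Set.Ici 1)
    (hm : ∀ i, 1 ≤ i → (a i ≤ c ↔ i ≤ m)) : seqCount a I c = (Set.Icc 1 m ∩ I).ncard := by
  unfold seqCount
  congr 1
  ext i
  simp only [Set.mem_ofPred_eq, Set.mem_inter_iff, Set.mem_Icc]
  constructor
  · rintro ⟨hiI, hic⟩
    have hi1 : 1 ≤ i := hI hiI
    exact ⟨⟨hi1, (hm i hi1).1 hic⟩, hiI⟩
  · rintro ⟨⟨hi1, him⟩, hiI⟩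
    exact ⟨hiI, (hm i hi1).2 him⟩

theorem sum_ne_of_gap (hmono : ∀ i j : ℕ, 1 ≤ i → i ≤ j → a i ≤ a j) {T : Finset ℕ}
    {B n z : ℕ} (hn : 1 ≤ n) (hT : ∀ i ∈ T, 1 ≤ i ∧ (i ≤ B ∨ n ≤ i))
    (hlo : ∑ i ∈ Finset.Icc 1 B, a i < z) (hhi : z < a n) : ∑ i ∈ T, a i ≠ z := by
  intro hsum
  by_cases h : ∃ i ∈ T, n ≤ i
  · obtain ⟨i, hiT, hni⟩ := h
    have := Finset.single_le_sum (fun j _ => Nat.zero_le (a j)) hiT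
    have := hmono n i hn hni
    omega
  · push Not at h
    have hTB : T ⊆ Finset.Icc 1 B := fun i hi =>
      Finset.mem_Icc.mpr ⟨(hT i hi).1, (hT i hi).2.resolve_right (h i hi).not_ge⟩
    have := Finset.sum_le_sum_of_subset (f := a) hTB
    omega

theorem not_seqComplete_outsideGaps (hpos : ∀ n : ℕ, 1 ≤ n → 0 < a n)
    (hmono : ∀ i j : ℕ, 1 ≤ i → i ≤ j → a i ≤ a j) {B N : ℕ → ℕ} (hBk : ∀ k, k ≤ B k)
    (hBN : ∀ k, B k < N (k + 1)) (hgap : ∀ k, ∑ i ∈ Finset.Icc 1 (B k), a i + 1 < a (N (k + 1))) :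
    ¬ seqComplete a (outsideGaps B N) := by
  rintro ⟨Z, hZ⟩
  obtain ⟨T, hTJ, hT⟩ := hZ (∑ i ∈ Finset.Icc 1 (B Z), a i + 1)
    (by linarith [hBk Z, le_sum_Icc hpos (B Z)])
  exact sum_ne_of_gap hmono (Nat.one_le_of_lt (hBN Z))
    (fun i hi => ⟨(hTJ hi).1, (hTJ hi).2 Z⟩) (Nat.lt_succ_self _) (hgap Z) hT

end Completeness

/-- Let `ε > 0`. If `A = (a_n)_{n≥1}` is a monotonically increasing sequence of positive
integers which is `ε`-complete, then there is a constant `C` such that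
`a_n ≤ ∑_{i ≤ εn + C} a_i` for all positive integers `n`. -/
theorem stmt17 (ε : ℝ) (hε : 0 < ε) (a : ℕ → ℕ)
    (hpos : ∀ n : ℕ, 1 ≤ n → 0 < a n)
    (hmono : ∀ i j : ℕ, 1 ≤ i → i ≤ j → a i ≤ a j)
    (hec : EpsComplete ε a) :
    ∃ C : ℝ, 0 ≤ C ∧ ∀ n : ℕ, 1 ≤ n →
      a n ≤ ∑ i ∈ Finset.Icc 1 ⌊ε * (n : ℝ) + C⌋₊, a i := by
  by_contra! hbad
  have hε1 : ε < 1 := by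
    by_contra! h
    obtain ⟨n, hn, hlt⟩ := hbad 0 le_rfl
    exact hlt.not_ge (le_sum_Icc_floor_of_one_le h le_rfl hn)
  have hunb : ∀ c : ℕ, ∃ n : ℕ, 1 ≤ n ∧ c < a n := fun c => by
    obtain ⟨n, hn, hlt⟩ := hbad c c.cast_nonneg
    exact ⟨n, hn, lt_of_not_ge fun h =>
      hlt.not_ge (le_sum_Icc_floor_of_le hpos hε.le (by exact_mod_cast h))⟩
  obtain ⟨B, N, hB, hBN, hgap⟩ := exists_gaps hpos hε.le hε1
    fun C hC => exists_gt_of_forall_sum_Icc_floor_lt hpos hmono hε.le hbad hC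
  refine not_seqComplete_outsideGaps hpos hmono (strictMono_left_of_gaps hε.le hB hBN).id_le
    hBN hgap (hec _ (fun i hi => hi.1) ⟨0, fun c _ => ?_⟩)
  obtain ⟨m, hm⟩ := exists_forall_le_iff_le hmono hunb c
  rw [seqCount_eq_ncard le_rfl hm, seqCount_eq_ncard (fun i hi => hi.1) hm,
    Set.inter_eq_left.mpr fun i hi => hi.1, Set.ncard_Icc_nat, Nat.add_sub_cancel]
  exact le_ncard_inter_outsideGaps hε.le hε1.le hB hBN m
end
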